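/- arXiv:2407.10392 — 8 statements merged into one kernel-verified Lean document; each statement's English description precedes it below -/
import Mathlib

section
/- Let ε > 0 and let A, B : (−ε, ε) → ℝ be real analytic functions. If there exists a sequence of points t_n ∈ (−ε, ε) with t_n ≠ 0, t_n → 0, and A(t_n) − B(t_n)·log|t_n| = 0 for every n, then A and B vanish identically on (−ε, ε). -/
/-!
Near `0` write `B = t ^ k • g` with `g 0 ≠ 0`, assuming `B` does not vanish identically there.
If `A` vanishes to order at least `k`, say `A = t ^ k • f`, then `f = g * log` at points
accumulating at `0`; dividing by `log t → -∞` gives `g 0 = 0`. If `A` has order `m < k`, say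
`A = t ^ m • f` with `f 0 ≠ 0`, then `f = t ^ (k - m) * log * g → 0` there, so `f 0 = 0`.
Hence `B`, and then `A`, vanish near `0`, and the identity theorem propagates this to `(-ε, ε)`.
-/

open Set Filter Topology Real

theorem tendsto_pow_mul_log_nhds_zero {j : ℕ} (hj : j ≠ 0) :
    Tendsto (fun t => t ^ j * log t) (𝓝 0) (𝓝 0) := by
  obtain ⟨i, rfl⟩ := Nat.exists_eq_succ_of_ne_zero hj
  have h : Continuous fun t : ℝ => t ^ i * (t * log t) :=
    (continuous_pow i).mul continuous_mul_log
  simpa [pow_succ, mul_assoc] using h.tendsto 0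

theorem not_frequently_eq_mul_log {g h : ℝ → ℝ} {a b : ℝ}
    (hh : Tendsto h (𝓝[≠] 0) (𝓝 a)) (hg : Tendsto g (𝓝[≠] 0) (𝓝 b)) (hb : b ≠ 0) :
    ¬∃ᶠ t in 𝓝[≠] 0, h t = g t * log t := by
  intro hfreq
  have hlog_ne : ∀ᶠ t in 𝓝[≠] (0 : ℝ), log t ≠ 0 :=
    (tendsto_log_nhdsNE_zero.eventually (eventually_lt_atBot 0)).mono fun _ => ne_of_lt
  have hquot : ∃ᶠ t in 𝓝[≠] 0, h t / log t = g t :=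
    (hfreq.and_eventually hlog_ne).mono fun t ⟨heq, hne⟩ => by
      rw [heq, mul_div_cancel_right₀ _ hne]
  exact hb (tendsto_nhds_unique_of_frequently_eq
    (hh.div_atBot tendsto_log_nhdsNE_zero) hg hquot).symm

theorem AnalyticAt.eventually_eq_zero_of_frequently_eq_mul_log {A B : ℝ → ℝ}
    (hA : AnalyticAt ℝ A 0) (hB : AnalyticAt ℝ B 0)
    (h : ∃ᶠ t in 𝓝[≠] 0, A t = B t * Real.log t) :
    (∀ᶠ t in 𝓝 0, A t = 0) ∧ ∀ᶠ t in 𝓝 0, B t = 0 := by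
  have hB0 : ∀ᶠ t in 𝓝 0, B t = 0 := by
    by_contra hne
    obtain ⟨k, g, hg, hg0, hBg⟩ := hB.exists_eventuallyEq_pow_smul_nonzero_iff.2 hne
    have hcont {f : ℝ → ℝ} (hf : AnalyticAt ℝ f 0) : Tendsto f (𝓝[≠] 0) (𝓝 (f 0)) :=
      hf.continuousAt.tendsto.mono_left nhdsWithin_le_nhds
    have hcancel {j : ℕ} {u v : ℝ → ℝ}
        (huv : ∃ᶠ t in 𝓝[≠] 0, t ^ j * u t = t ^ j * v t) : ∃ᶠ t in 𝓝[≠] 0, u t = v t :=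
      (huv.and_eventually self_mem_nhdsWithin).mono fun t ⟨heq, ht⟩ =>
        mul_left_cancel₀ (pow_ne_zero _ ht) heq
    rcases le_or_gt (k : ℕ∞) (analyticOrderAt A 0) with hk | hk
    · obtain ⟨f, hf, hAf⟩ := (natCast_le_analyticOrderAt hA).1 hk
      refine not_frequently_eq_mul_log (hcont hf) (hcont hg) hg0 (hcancel (j := k) ?_)
      refine (h.and_eventually ((hAf.and hBg).filter_mono nhdsWithin_le_nhds)).mono ?_
      rintro t ⟨heq, hAt, hBt⟩
      simp only [hAt, hBt, sub_zero, smul_eq_mul] at heq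
      rw [heq, mul_assoc]
    · obtain ⟨m, hm⟩ := ENat.ne_top_iff_exists.1 hk.ne_top
      obtain ⟨f, hf, hf0, hAf⟩ := hA.analyticOrderAt_eq_natCast.1 hm.symm
      have hmk : m < k := by exact_mod_cast hm ▸ hk
      have hlim :
          Tendsto (fun t => t ^ (k - m) * Real.log t * g t) (𝓝[≠] 0) (𝓝 (0 * g 0)) :=
        ((tendsto_pow_mul_log_nhds_zero (Nat.sub_ne_zero_of_lt hmk)).mono_left
          nhdsWithin_le_nhds).mul (hcont hg)
      refine hf0 ((tendsto_nhds_unique_of_frequently_eq (hcont hf) hlim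
        (hcancel (j := m) ?_)).trans (zero_mul _))
      refine (h.and_eventually ((hAf.and hBg).filter_mono nhdsWithin_le_nhds)).mono ?_
      rintro t ⟨heq, hAt, hBt⟩
      simp only [hAt, hBt, sub_zero, smul_eq_mul] at heq
      rw [heq, ← pow_mul_pow_sub t hmk.le]
      ring
  refine ⟨hA.frequently_zero_iff_eventually_zero.1 ?_, hB0⟩
  exact (h.and_eventually (hB0.filter_mono nhdsWithin_le_nhds)).mono fun t ⟨heq, hBt⟩ => by
    rw [heq, hBt, zero_mul]

theorem stmt_0_general (ε : ℝ) (hε : 0 < ε) (A B : ℝ → ℝ)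
    (hA : AnalyticOnNhd ℝ A (Ioo (-ε) ε))
    (hB : AnalyticOnNhd ℝ B (Ioo (-ε) ε))
    (t : ℕ → ℝ) (htne : ∀ n, t n ≠ 0)
    (hlim : Tendsto t atTop (nhds 0))
    (hzero : ∀ n, A (t n) - B (t n) * Real.log |t n| = 0) :
    ∀ x ∈ Ioo (-ε) ε, A x = 0 ∧ B x = 0 := by
  have h0 : (0 : ℝ) ∈ Ioo (-ε) ε := ⟨neg_lt_zero.2 hε, hε⟩
  have ht : Tendsto t atTop (𝓝[≠] 0) := tendsto_nhdsWithin_iff.2 ⟨hlim, .of_forall htne⟩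
  have hfreq : ∃ᶠ x in 𝓝[≠] 0, A x = B x * log x :=
    ht.frequently (.of_forall fun n => by rw [← log_abs]; linarith [hzero n])
  obtain ⟨hA0, hB0⟩ :=
    AnalyticAt.eventually_eq_zero_of_frequently_eq_mul_log (hA 0 h0) (hB 0 h0) hfreq
  intro x hx
  exact ⟨hA.eqOn_zero_of_preconnected_of_eventuallyEq_zero isPreconnected_Ioo h0 hA0 hx,
    hB.eqOn_zero_of_preconnected_of_eventuallyEq_zero isPreconnected_Ioo h0 hB0 hx⟩

/-- Lemma 3.4: if real analytic `A`, `B` on `(-ε, ε)` satisfy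
`A(tₙ) - B(tₙ) log|tₙ| = 0` along a sequence of nonzero points `tₙ → 0`,
then `A` and `B` vanish identically. -/
theorem stmt_0 (ε : ℝ) (hε : 0 < ε) (A B : ℝ → ℝ)
    (hA : AnalyticOnNhd ℝ A (Ioo (-ε) ε))
    (hB : AnalyticOnNhd ℝ B (Ioo (-ε) ε))
    (t : ℕ → ℝ) (ht : ∀ n, t n ∈ Ioo (-ε) ε) (htne : ∀ n, t n ≠ 0)
    (hlim : Tendsto t atTop (nhds 0))
    (hzero : ∀ n, A (t n) - B (t n) * Real.log |t n| = 0) :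
    ∀ x ∈ Ioo (-ε) ε, A x = 0 ∧ B x = 0 :=
  stmt_0_general ε hε A B hA hB t htne hlim hzero
end

section
/- Let n ≥ 1 and let Γ be a subgroup of GL_n(ℤ) such that the only vector v ∈ ℂⁿ satisfying Tv = v for all T ∈ Γ is v = 0. If v ∈ ℂⁿ satisfies (T − I)v ∈ ℤⁿ for every T ∈ Γ, then v ∈ ℚⁿ. -/
/-!
Apply a `ℚ`-linear functional `φ : ℂ → ℚ` that vanishes on `ℚ` to `v` coordinatewise. Since the
matrices in `Γ` have integer entries, `(T - I)(φ ∘ v) = φ ∘ ((T - I) v) = 0`, so `φ ∘ v` is fixed by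
`Γ` and hence zero. A complex number killed by every such `φ` lies in `ℚ`.
-/

open Matrix

theorem Matrix.map_intCast_mulVec_comp {m n R S : Type*} [Fintype n] [Ring R] [Ring S]
    (f : R →+ S) (M : Matrix m n ℤ) (v : n → R) :
    M.map (Int.cast : ℤ → S) *ᵥ (f ∘ v) = f ∘ (M.map (Int.cast : ℤ → R) *ᵥ v) := by
  ext i
  simp [mulVec, dotProduct, map_sum, ← zsmul_eq_mul]

theorem Matrix.map_intCast_mulVec_comp_eq_self_of_sub_intCast {n R S : Type*} [Fintype n] [Ring R]
    [Ring S] (f : R →+ S) (hf : ∀ k : ℤ, f k = 0) (M : Matrix n n ℤ) (v : n → R)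
    (hv : ∀ i, ∃ k : ℤ, (M.map (Int.cast : ℤ → R) *ᵥ v - v) i = k) :
    M.map (Int.cast : ℤ → S) *ᵥ (f ∘ v) = f ∘ v := by
  rw [map_intCast_mulVec_comp]
  ext i
  obtain ⟨k, hk⟩ := hv i
  rw [Pi.sub_apply, sub_eq_iff_eq_add] at hk
  simp [hk, hf]

theorem stmt_4_general (n : ℕ) (Γ : Subgroup (GL (Fin n) ℤ))
    (hfix : ∀ v : Fin n → ℂ,
      (∀ T ∈ Γ, ((T : Matrix (Fin n) (Fin n) ℤ).map (Int.cast : ℤ → ℂ)).mulVec v = v) →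
      v = 0)
    (v : Fin n → ℂ)
    (hv : ∀ T ∈ Γ, ∀ i : Fin n, ∃ m : ℤ,
      (((T : Matrix (Fin n) (Fin n) ℤ).map (Int.cast : ℤ → ℂ)).mulVec v - v) i = m) :
    ∀ i : Fin n, ∃ q : ℚ, v i = q := by
  intro i
  have hvi : v i ∈ LinearMap.range (Algebra.linearMap ℚ ℂ) := by
    refine (Subspace.forall_mem_dualAnnihilator_apply_eq_zero_iff _ _).mp fun φ hφ => ?_
    let f : ℂ →+ ℂ := (Rat.castHom ℂ).toAddMonoidHom.comp φ.toAddMonoidHom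
    have hf : ∀ k : ℤ, f k = 0 := fun k => by
      simpa [f] using (Submodule.mem_dualAnnihilator φ).mp hφ _ ⟨(k : ℚ), by simp⟩
    have hfv := hfix (f ∘ v) fun T hT =>
      map_intCast_mulVec_comp_eq_self_of_sub_intCast f hf _ v (hv T hT)
    simpa [f] using congrFun hfv i
  obtain ⟨q, hq⟩ := hvi
  exact ⟨q, by simpa using hq.symm⟩

/-- Algebraic core of Lemma 3.1: if `Γ ≤ GL_n(ℤ)` has no nonzero fixed vector in `ℂⁿ`,
and `v ∈ ℂⁿ` satisfies `(T - I)v ∈ ℤⁿ` for all `T ∈ Γ`, then `v ∈ ℚⁿ`. -/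
theorem stmt_4 (n : ℕ) (hn : 1 ≤ n) (Γ : Subgroup (GL (Fin n) ℤ))
    (hfix : ∀ v : Fin n → ℂ,
      (∀ T ∈ Γ, ((T : Matrix (Fin n) (Fin n) ℤ).map (Int.cast : ℤ → ℂ)).mulVec v = v) →
      v = 0)
    (v : Fin n → ℂ)
    (hv : ∀ T ∈ Γ, ∀ i : Fin n, ∃ m : ℤ,
      (((T : Matrix (Fin n) (Fin n) ℤ).map (Int.cast : ℤ → ℂ)).mulVec v - v) i = m) :
    ∀ i : Fin n, ∃ q : ℚ, v i = q :=
  stmt_4_general n Γ hfix v hv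
end

section
/- Let Δ ⊆ ℂ be an open disc centered at 0, and let F, K : Δ → ℂ be holomorphic functions such that Im K(z) ≠ 0 for every z ∈ Δ ∖ {0}. If there exists a sequence z_n ∈ Δ ∖ {0} with z_n → 0 such that Im F(z_n) = 0 and Im(F(z_n)·K(z_n)) = 0 for all n, then F vanishes identically on Δ. -/
/-! Along the sequence, `Im F = 0` makes `Im (F K) = Re F · Im K`, and `Im K ≠ 0` off the origin
forces `Re F = 0` as well. So `F` vanishes on a sequence of nonzero points accumulating at `0`,
and the identity theorem gives `F ≡ 0` on the (connected) disc. -/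

open Metric Filter Set Topology

theorem Complex.eq_zero_of_im_eq_zero_of_im_mul_eq_zero {w k : ℂ} (hw : w.im = 0)
    (hwk : (w * k).im = 0) (hk : k.im ≠ 0) : w = 0 := by
  rw [Complex.mul_im, hw, zero_mul, add_zero] at hwk
  exact Complex.ext ((mul_eq_zero.mp hwk).resolve_right hk) hw

theorem AnalyticOnNhd.eqOn_zero_of_tendsto_of_ne {𝕜 E : Type*} [NontriviallyNormedField 𝕜]
    [NormedAddCommGroup E] [NormedSpace 𝕜 E] {f : 𝕜 → E} {U : Set 𝕜}
    (hf : AnalyticOnNhd 𝕜 f U) (hU : IsPreconnected U) {z₀ : 𝕜} (h₀ : z₀ ∈ U)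
    {u : ℕ → 𝕜} (hu : Tendsto u atTop (𝓝 z₀)) (hne : ∀ n, u n ≠ z₀)
    (hzero : ∀ n, f (u n) = 0) : EqOn f 0 U :=
  have hu' : Tendsto u atTop (𝓝[≠] z₀) :=
    tendsto_nhdsWithin_of_tendsto_nhds_of_eventually_within u hu (Eventually.of_forall hne)
  hf.eqOn_zero_of_preconnected_of_frequently_eq_zero hU h₀
    (hu'.frequently (Frequently.of_forall hzero))

theorem stmt_5_general (ρ : ℝ) (hρ : 0 < ρ) (F K : ℂ → ℂ)
    (hF : AnalyticOnNhd ℂ F (ball 0 ρ))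
    (hKim : ∀ z ∈ ball (0 : ℂ) ρ, z ≠ 0 → (K z).im ≠ 0)
    (z : ℕ → ℂ) (hz : ∀ n, z n ∈ ball (0 : ℂ) ρ) (hzne : ∀ n, z n ≠ 0)
    (hlim : Tendsto z atTop (nhds 0))
    (hImF : ∀ n, (F (z n)).im = 0)
    (hImFK : ∀ n, (F (z n) * K (z n)).im = 0) :
    ∀ w ∈ ball (0 : ℂ) ρ, F w = 0 := by
  have hFz : ∀ n, F (z n) = 0 := fun n ↦
    Complex.eq_zero_of_im_eq_zero_of_im_mul_eq_zero (hImF n) (hImFK n)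
      (hKim (z n) (hz n) (hzne n))
  exact hF.eqOn_zero_of_tendsto_of_ne (convex_ball 0 ρ).isPreconnected (mem_ball_self hρ)
    hlim hzne hFz

/-- Concluding argument of §2 (trivial monodromy case): if `F`, `K` are holomorphic on a
disc `Δ` with `Im K ≠ 0` off the origin, and `Im F` and `Im(F·K)` both vanish along a
sequence of nonzero points tending to `0`, then `F ≡ 0` on `Δ`. -/
theorem stmt_5 (ρ : ℝ) (hρ : 0 < ρ) (F K : ℂ → ℂ)
    (hF : AnalyticOnNhd ℂ F (ball 0 ρ))
    (hK : AnalyticOnNhd ℂ K (ball 0 ρ))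
    (hKim : ∀ z ∈ ball (0 : ℂ) ρ, z ≠ 0 → (K z).im ≠ 0)
    (z : ℕ → ℂ) (hz : ∀ n, z n ∈ ball (0 : ℂ) ρ) (hzne : ∀ n, z n ≠ 0)
    (hlim : Tendsto z atTop (nhds 0))
    (hImF : ∀ n, (F (z n)).im = 0)
    (hImFK : ∀ n, (F (z n) * K (z n)).im = 0) :
    ∀ w ∈ ball (0 : ℂ) ρ, F w = 0 :=
  stmt_5_general ρ hρ F K hF hKim z hz hzne hlim hImF hImFK
end

section
/- Let ε > 0, let h be a holomorphic function on the disc {z ∈ ℂ : |z| < ε}, and let a ∈ ℝ with a ≠ 0. Then there exists δ ∈ (0, ε] such that a·log|z| + Im h(z) ≠ 0 for all z with 0 < |z| < δ. -/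
open Metric Set Filter Topology

/-! Since `log ‖z‖ → -∞` as `z → 0` while `Im h` stays bounded near `0`, the sum
`a log ‖z‖ + Im h(z) = a (log ‖z‖ + Im h(z) / a)` tends to `∓∞` and so has no zero on a small
punctured disc. -/

theorem tendsto_log_norm_nhdsNE_zero {E : Type*} [NormedAddGroup E] :
    Tendsto (fun z : E => Real.log ‖z‖) (𝓝[≠] 0) atBot :=
  Real.tendsto_log_nhdsGT_zero.comp tendsto_norm_nhdsNE_zero

theorem eventually_mul_log_norm_add_ne_zero {E : Type*} [NormedAddGroup E] {g : E → ℝ} {c : ℝ}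
    (hg : Tendsto g (𝓝[≠] 0) (𝓝 c)) {a : ℝ} (ha : a ≠ 0) :
    ∀ᶠ z in 𝓝[≠] 0, a * Real.log ‖z‖ + g z ≠ 0 := by
  have hbot : Tendsto (fun z => Real.log ‖z‖ + g z / a) (𝓝[≠] 0) atBot :=
    tendsto_log_norm_nhdsNE_zero.atBot_add (hg.div_const a)
  filter_upwards [hbot.eventually_ne_atBot 0] with z hz
  rw [← mul_div_cancel₀ (g z) ha, ← mul_add]
  exact mul_ne_zero ha hz

theorem exists_mem_Ioc_of_eventually_nhdsNE_zero {E : Type*} [NormedAddGroup E] {p : E → Prop}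
    (hp : ∀ᶠ z in 𝓝[≠] 0, p z) {ε : ℝ} (hε : 0 < ε) :
    ∃ δ ∈ Ioc (0 : ℝ) ε, ∀ z : E, 0 < ‖z‖ → ‖z‖ < δ → p z := by
  obtain ⟨δ, hδ, hδp⟩ := Metric.eventually_nhds_iff.mp (eventually_nhdsWithin_iff.mp hp)
  refine ⟨min δ ε, ⟨lt_min hδ hε, min_le_right δ ε⟩, fun z hz hzδ => hδp ?_ ?_⟩
  · simpa using hzδ.trans_le (min_le_left δ ε)
  · exact norm_pos_iff.mp hz

/-- For holomorphic `h` on a disc of radius `ε` and `a ≠ 0`, the function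
`a log|z| + Im h(z)` has no zero on a sufficiently small punctured disc. -/
theorem stmt_6 (ε : ℝ) (hε : 0 < ε) (h : ℂ → ℂ)
    (hh : AnalyticOnNhd ℂ h (ball 0 ε)) (a : ℝ) (ha : a ≠ 0) :
    ∃ δ ∈ Ioc (0 : ℝ) ε, ∀ z : ℂ, 0 < ‖z‖ → ‖z‖ < δ →
      a * Real.log ‖z‖ + (h z).im ≠ 0 := by
  have him : ContinuousAt (fun z => (h z).im) 0 :=
    Complex.continuous_im.continuousAt.comp (hh 0 (mem_ball_self hε)).continuousAt
  exact exists_mem_Ioc_of_eventually_nhdsNE_zero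
    (eventually_mul_log_norm_add_ne_zero (him.tendsto.mono_left nhdsWithin_le_nhds) ha) hε
end

section
/- Let 1 ≤ d, let U ⊆ ℂ^d be open, and let R : U → ℂ^N be a holomorphic map such that for every z ∈ U the 2d vectors ∂R/∂z_1(z), …, ∂R/∂z_d(z), together with their complex conjugates, are linearly independent over ℂ in ℂ^N. Then the zero set of the map z ↦ Im R(z) (the componentwise imaginary part) consists of isolated points of U; that is, every point of U has a neighborhood containing at most one zero of Im R. -/
open Set Function

/-!
The derivative of `Im R` at a point is `v ↦ Im (R' v)`. If `Im (R' v) = 0` then `R' v` equals its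
conjugate, which is a linear relation between the `∂R/∂z_j` and their conjugates; independence
forces `v = 0`. So the derivative of `Im R` is injective, and a map with injective strict
derivative is injective near the point.
-/

section LocalInjectivity

variable {𝕜 E F : Type*} [NontriviallyNormedField 𝕜] [NormedAddCommGroup E] [NormedSpace 𝕜 E]
  [NormedAddCommGroup F] [NormedSpace 𝕜 F] {f : E → F} {f' : E →L[𝕜] F}

theorem ApproximatesLinearOn.injOn_of_antilipschitzWith {s : Set E} {c K : NNReal}
    (hf : ApproximatesLinearOn f f' s c) (hK : AntilipschitzWith K f') (hc : c < K⁻¹) :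
    InjOn f s := by
  intro x hx y hy hxy
  have := ((hK.domRestrict s).add_lipschitzWith hf.lipschitz_sub hc).injective
    (a₁ := ⟨x, hx⟩) (a₂ := ⟨y, hy⟩) (by simp [hxy])
  simpa using this

theorem HasStrictFDerivAt.exists_isOpen_injOn [CompleteSpace 𝕜] [FiniteDimensional 𝕜 E] {x : E}
    (hf : HasStrictFDerivAt f f' x) (hinj : Injective f') :
    ∃ V : Set E, IsOpen V ∧ x ∈ V ∧ InjOn f V := by
  obtain ⟨K, hK, hanti⟩ := (f' : E →ₗ[𝕜] F).injective_iff_antilipschitz.mp hinj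
  have hc : K⁻¹ / 2 < K⁻¹ := NNReal.half_lt_self (inv_ne_zero hK.ne')
  obtain ⟨s, hs, happrox⟩ := hf.approximates_deriv_on_nhds (c := K⁻¹ / 2) (Or.inr (by positivity))
  obtain ⟨V, hVs, hVo, hxV⟩ := mem_nhds_iff.mp hs
  exact ⟨V, hVo, hxV, (happrox.injOn_of_antilipschitzWith hanti hc).mono hVs⟩

end LocalInjectivity

theorem LinearIndependent.eq_zero_of_star_sum_smul_eq {ι M : Type*} [Fintype ι] [AddCommGroup M]
    [Module ℂ M] [StarAddMonoid M] [StarModule ℂ M] {v : ι → M}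
    (hv : LinearIndependent ℂ (Sum.elim v (fun j => star (v j)))) {u : ι → ℂ}
    (hu : star (∑ j, u j • v j) = ∑ j, u j • v j) : u = 0 := by
  have hrel : ∑ s, Sum.elim u (fun j => -star (u j)) s • Sum.elim v (fun j => star (v j)) s
      = 0 := by
    simp only [Fintype.sum_sum_type, Sum.elim_inl, Sum.elim_inr, neg_smul,
      Finset.sum_neg_distrib, ← star_smul, ← star_sum, hu, add_neg_cancel]
  funext j
  exact Fintype.linearIndependent_iff.mp hv _ hrel (Sum.inl j)

noncomputable def Pi.imCLM (ι : Type*) : (ι → ℂ) →L[ℝ] (ι → ℝ) :=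
  ContinuousLinearMap.pi fun i => Complex.imCLM.comp (ContinuousLinearMap.proj i)

@[simp]
theorem Pi.imCLM_apply {ι : Type*} (x : ι → ℂ) (i : ι) : Pi.imCLM ι x i = (x i).im := rfl

theorem Pi.imCLM_eq_zero_iff {ι : Type*} (x : ι → ℂ) : Pi.imCLM ι x = 0 ↔ star x = x := by
  simp only [funext_iff, Pi.imCLM_apply, Pi.zero_apply, Pi.star_apply, Complex.star_def,
    Complex.conj_eq_iff_im]

theorem Pi.injective_imCLM_comp_of_linearIndependent {ι κ : Type*} [Fintype ι] [DecidableEq ι]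
    (A : (ι → ℂ) →L[ℂ] (κ → ℂ))
    (hA : LinearIndependent ℂ
      (Sum.elim (fun j => A (Pi.single j 1)) (fun j => star (A (Pi.single j 1))))) :
    Injective ((Pi.imCLM κ).comp (A.restrictScalars ℝ)) := by
  rw [← ContinuousLinearMap.coe_coe, ← LinearMap.ker_eq_bot, LinearMap.ker_eq_bot']
  intro u hu
  have hsum : A u = ∑ j, u j • A (Pi.single j 1) := by
    conv_lhs => rw [pi_eq_sum_univ' u, map_sum]
    simp only [map_smul]
  have hreal : star (A u) = A u := (Pi.imCLM_eq_zero_iff _).mp hu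
  rw [hsum] at hreal
  exact hA.eq_zero_of_star_sum_smul_eq hreal

theorem stmt_8_general (d N : ℕ) (U : Set (Fin d → ℂ))
    (R : (Fin d → ℂ) → Fin N → ℂ) (hR : AnalyticOnNhd ℂ R U)
    (hind : ∀ z ∈ U, LinearIndependent ℂ
      (Sum.elim (fun j : Fin d => fderiv ℂ R z (Pi.single j 1))
        (fun j : Fin d => star (fderiv ℂ R z (Pi.single j 1))))) :
    ∀ z ∈ U, ∃ V : Set (Fin d → ℂ), IsOpen V ∧ z ∈ V ∧
      ∀ w₁ ∈ V ∩ U, ∀ w₂ ∈ V ∩ U,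
        (∀ i, (R w₁ i).im = 0) → (∀ i, (R w₂ i).im = 0) → w₁ = w₂ := by
  intro z hz
  have hderiv : HasStrictFDerivAt (fun w => Pi.imCLM (Fin N) (R w))
      ((Pi.imCLM (Fin N)).comp ((fderiv ℂ R z).restrictScalars ℝ)) z :=
    (Pi.imCLM _).hasStrictFDerivAt.comp z ((hR z hz).hasStrictFDerivAt.restrictScalars ℝ)
  obtain ⟨V, hVo, hzV, hinjV⟩ :=
    hderiv.exists_isOpen_injOn (Pi.injective_imCLM_comp_of_linearIndependent _ (hind z hz))
  refine ⟨V, hVo, hzV, fun w₁ hw₁ w₂ hw₂ h₁ h₂ => hinjV hw₁.1 hw₂.1 ?_⟩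
  ext i
  simp [h₁ i, h₂ i]

/-- Lemma 4.1 (analytic content): if `R : U → ℂ^N` is holomorphic and at every point of
`U` the partial derivatives `∂R/∂z_j` together with their componentwise complex
conjugates are `ℂ`-linearly independent, then the zeroes of `Im R` are isolated in `U`. -/
theorem stmt_8 (d N : ℕ) (hd : 1 ≤ d) (U : Set (Fin d → ℂ)) (hU : IsOpen U)
    (R : (Fin d → ℂ) → Fin N → ℂ) (hR : AnalyticOnNhd ℂ R U)
    (hind : ∀ z ∈ U, LinearIndependent ℂ
      (Sum.elim (fun j : Fin d => fderiv ℂ R z (Pi.single j 1))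
        (fun j : Fin d => star (fderiv ℂ R z (Pi.single j 1))))) :
    ∀ z ∈ U, ∃ V : Set (Fin d → ℂ), IsOpen V ∧ z ∈ V ∧
      ∀ w₁ ∈ V ∩ U, ∀ w₂ ∈ V ∩ U,
        (∀ i, (R w₁ i).im = 0) → (∀ i, (R w₂ i).im = 0) → w₁ = w₂ :=
  stmt_8_general d N U R hR hind
end

section
/- Let g, d ≥ 1, let τ ∈ M_g(ℂ) be a complex g×g matrix whose entrywise imaginary part Im τ is invertible, let f be a complex g×d matrix, and let a, b ∈ ℝ^d. If Im(f)·a + Re(f)·b = 0 and Im(τf)·a + Re(τf)·b = 0, then f·(a + i·b) = 0 in ℂ^g. -/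
/-!
With `u = f (a + ib)`, the two hypotheses say exactly that `Im u = 0` and `Im (τ u) = 0`.
Since `u` is real, `Im (τ u) = (Im τ) (Re u)`, so invertibility of `Im τ` forces `Re u = 0`.
-/

open Matrix Complex

theorem Matrix.im_mulVec {m n : Type*} [Fintype n] (M : Matrix m n ℂ) (w : n → ℂ) :
    (fun i => (M *ᵥ w) i |>.im) =
      M.map im *ᵥ (fun j => (w j).re) + M.map re *ᵥ (fun j => (w j).im) := by
  ext i
  simp only [mulVec, dotProduct, Pi.add_apply, map_apply, im_sum, ← Finset.sum_add_distrib,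
    mul_im]
  exact Finset.sum_congr rfl fun _ _ => by ring

theorem stmt_10_general (g d : ℕ)
    (τ : Matrix (Fin g) (Fin g) ℂ) (hτ : IsUnit (τ.map Complex.im))
    (f : Matrix (Fin g) (Fin d) ℂ) (a b : Fin d → ℝ)
    (h1 : (f.map Complex.im).mulVec a + (f.map Complex.re).mulVec b = 0)
    (h2 : ((τ * f).map Complex.im).mulVec a + ((τ * f).map Complex.re).mulVec b = 0) :
    f.mulVec (fun j => (a j : ℂ) + Complex.I * (b j : ℂ)) = 0 := by
  set u := f *ᵥ fun j => (a j : ℂ) + I * (b j : ℂ)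
  have hv_re : (fun j => ((a j : ℂ) + I * (b j : ℂ)).re) = a := by ext; simp
  have hv_im : (fun j => ((a j : ℂ) + I * (b j : ℂ)).im) = b := by ext; simp
  have hu_im : (fun i => (u i).im) = 0 := by rw [Matrix.im_mulVec, hv_re, hv_im, h1]
  have hτu_im : (fun i => ((τ *ᵥ u) i).im) = 0 := by
    rw [mulVec_mulVec, Matrix.im_mulVec, hv_re, hv_im, h2]
  have hu_re : (fun i => (u i).re) = 0 := by
    refine mulVec_injective_of_isUnit hτ ?_
    rw [mulVec_zero, ← hτu_im, Matrix.im_mulVec, hu_im, mulVec_zero, add_zero]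
  ext i
  exact Complex.ext (congrFun hu_re i) (congrFun hu_im i)

/-- Key linear-algebra computation of §§3.2, 4.2: if `Im τ` is invertible and the real
vectors `a`, `b` satisfy `Im(f)a + Re(f)b = 0` and `Im(τf)a + Re(τf)b = 0`, then
`f(a + ib) = 0`. -/
theorem stmt_10 (g d : ℕ) (hg : 1 ≤ g) (hd : 1 ≤ d)
    (τ : Matrix (Fin g) (Fin g) ℂ) (hτ : IsUnit (τ.map Complex.im))
    (f : Matrix (Fin g) (Fin d) ℂ) (a b : Fin d → ℝ)
    (h1 : (f.map Complex.im).mulVec a + (f.map Complex.re).mulVec b = 0)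
    (h2 : ((τ * f).map Complex.im).mulVec a + ((τ * f).map Complex.re).mulVec b = 0) :
    f.mulVec (fun j => (a j : ℂ) + Complex.I * (b j : ℂ)) = 0 :=
  stmt_10_general g d τ hτ f a b h1 h2
end

section
/- Let U ⊆ ℂ^d be an open ball centered at the origin, let F, G : U → ℂ^g be holomorphic with F(0) = 0 and G(0) = 0, and let τ : U → M_g(ℂ) be holomorphic with dG = τ·dF, i.e., ∂G/∂z_m(z) = τ(z)·∂F/∂z_m(z) for every m and z. Assume that each component F_j is either identically zero or of the form F_j(z) = u_j(z)·z^{α_j} for a holomorphic function u_j nonvanishing on U and a multi-index α_j (so the zero divisor of each F_j is a union of coordinate hyperplanes). Then there exist an open ball U′ ⊆ U centered at the origin and a holomorphic map S : U′ → M_g(ℂ) such that G(z) = S(z)·F(z) for all z ∈ U′ and S(0) = τ(0). -/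
/-!
Put `H = G - τ F`. The relation `dG = τ dF` gives `dH = -(dτ) F`, so integrating along the ray
`t ↦ t z` yields `H_i(z) = -∑_j ∫₀¹ (Dτ_ij(t z) z) F_j(t z) dt`. If `F_j = u_j z^{α_j}` with
`|α_j| = k + 1`, homogeneity of the monomial pulls `z^{α_j} = F_j(z) / u_j(z)` out of the
integral, leaving `∫₀¹ t^k Ψ(t z) dt` with `Ψ(w) = u_j(w) Dτ_ij(w) w`. Integrating the power
series of `Ψ` termwise shows that this is holomorphic near `0`, and it vanishes at `0` because
`Ψ(0) = 0`. So `S = τ - R` with `R_ij = u_j⁻¹ ∫₀¹ t^k Ψ(t z) dt` works.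
-/

open Metric Matrix Set Filter MeasureTheory intervalIntegral
open scoped ENNReal

section RayIntegral

variable {E E' F : Type*} [NormedAddCommGroup E] [NormedSpace ℂ E]
  [NormedAddCommGroup E'] [NormedSpace ℂ E'] [NormedAddCommGroup F] [NormedSpace ℂ F]

theorem smul_mem_ball_zero_of_mem_uIcc {z : E} {ρ : ℝ} (hz : z ∈ ball (0 : E) ρ) {t : ℝ}
    (ht : t ∈ uIcc (0 : ℝ) 1) : t • z ∈ ball (0 : E) ρ := by
  rw [uIcc_of_le zero_le_one] at ht
  exact ((convex_ball 0 ρ).starConvex (mem_ball_self (pos_of_mem_ball hz))).smul_mem hz ht.1 ht.2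

theorem ContinuousOn.intervalIntegrable_comp_smul {G : Type*} [NormedAddCommGroup G]
    {φ : E → G} {ρ : ℝ} (hφ : ContinuousOn φ (ball 0 ρ)) {z : E} (hz : z ∈ ball (0 : E) ρ) :
    IntervalIntegrable (fun t : ℝ => φ (t • z)) volume 0 1 :=
  (hφ.comp (by fun_prop) fun _ ht => smul_mem_ball_zero_of_mem_uIcc hz ht).intervalIntegrable

theorem AnalyticAt.clm_apply {L : E → E' →L[ℂ] F} {v : E → E'} {x : E}
    (hL : AnalyticAt ℂ L x) (hv : AnalyticAt ℂ v x) : AnalyticAt ℂ (fun w => L w (v w)) x :=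
  AnalyticAt.comp₂ (h := fun p : (E' →L[ℂ] F) × E' => p.1 p.2)
    ((ContinuousLinearMap.id ℂ (E' →L[ℂ] F)).analyticAt_bilinear (L x, v x)) hL hv

theorem HasFPowerSeriesOnBall.hasSum_pow_smul {Ψ : E → F} {p : FormalMultilinearSeries ℂ E F}
    {R : ℝ≥0∞} (hp : HasFPowerSeriesOnBall Ψ p 0 R) {c : ℂ} {y : E} (hy : c • y ∈ eball 0 R) :
    HasSum (fun n => c ^ n • p n (fun _ => y)) (Ψ (c • y)) := by
  simpa [(p _).map_smul_univ (fun _ => c)] using hp.hasSum hy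

theorem integral_ofReal_pow_smul [CompleteSpace F] (n : ℕ) (v : F) :
    ∫ t in (0 : ℝ)..1, (t : ℂ) ^ n • v = ((n : ℂ) + 1)⁻¹ • v := by
  rw [intervalIntegral.integral_smul_const]
  congr 1
  simp_rw [← Complex.ofReal_pow]
  rw [intervalIntegral.integral_ofReal, integral_pow]
  push_cast
  simp

theorem AnalyticAt.integral_pow_smul_comp_smul [CompleteSpace F] {Ψ : E → F}
    (hΨ : AnalyticAt ℂ Ψ 0) (k : ℕ) :
    AnalyticAt ℂ (fun z => ∫ t in (0 : ℝ)..1, (t : ℂ) ^ k • Ψ (t • z)) 0 := by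
  obtain ⟨p, R, hp⟩ := hΨ
  obtain ⟨r, hr0, hrR⟩ := ENNReal.lt_iff_exists_nnreal_btwn.mp hp.r_pos
  have hsum : Summable fun n => ‖p n‖ * (r : ℝ) ^ n :=
    p.summable_norm_mul_pow (hrR.trans_le hp.r_le)
  -- `∫₀¹ t ^ (n + k) dt = (n + k + 1)⁻¹` rescales the `n`-th coefficient of `Ψ`
  let q : FormalMultilinearSeries ℂ E F := fun n => ((n + k + 1 : ℕ) : ℂ)⁻¹ • p n
  have hq : ∀ n, ‖q n‖ ≤ ‖p n‖ := fun n => by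
    rw [norm_smul, norm_inv, Complex.norm_natCast]
    exact mul_le_of_le_one_left (norm_nonneg _) (inv_le_one_of_one_le₀ (by norm_cast; omega))
  refine ⟨q, r, ⟨q.le_radius_of_summable (hsum.of_nonneg_of_le (fun _ => by positivity)
    fun n => mul_le_mul_of_nonneg_right (hq n) (by positivity)), by exact_mod_cast hr0,
    fun {y} hy => ?_⟩⟩
  have hyr : ‖y‖ ≤ r := by
    rw [mem_eball_zero_iff] at hy
    exact_mod_cast hy.le
  have hterm : ∀ n, q n (fun _ => y) = ∫ t in (0 : ℝ)..1, (t : ℂ) ^ (n + k) • p n (fun _ => y) :=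
    fun n => by rw [integral_ofReal_pow_smul]; simp [q]
  simp only [zero_add, hterm]
  refine hasSum_integral_of_dominated_convergence (fun n _ => ‖p n‖ * (r : ℝ) ^ n)
    (fun n => by fun_prop) (fun n => ae_of_all _ fun t ht => ?_) (ae_of_all _ fun _ _ => hsum)
    intervalIntegrable_const (ae_of_all _ fun t ht => ?_)
  all_goals rw [uIoc_of_le zero_le_one] at ht
  · calc ‖(t : ℂ) ^ (n + k) • p n (fun _ => y)‖ ≤ ‖p n (fun _ => y)‖ := by
          rw [norm_smul, norm_pow, Complex.norm_real, Real.norm_of_nonneg ht.1.le]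
          exact mul_le_of_le_one_left (norm_nonneg _) (pow_le_one₀ ht.1.le ht.2)
      _ ≤ ‖p n‖ * r ^ n :=
          (p n).le_opNorm_mul_pow_of_le ((pi_norm_le_iff_of_nonneg r.2).2 fun _ => hyr)
  · have hty : t • y ∈ eball (0 : E) R := eball_subset_eball hrR.le <|
      ((convex_eball 0 (r : ℝ≥0∞)).starConvex (mem_eball_self (by exact_mod_cast hr0))).smul_mem
        hy ht.1.le ht.2
    rw [← Complex.coe_smul] at hty ⊢
    simpa [smul_smul, pow_add, mul_comm] using (hp.hasSum_pow_smul hty).const_smul ((t : ℂ) ^ k)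

theorem DifferentiableAt.hasDerivAt_comp_smul {f : E → F} {z : E} {t : ℝ}
    (hf : DifferentiableAt ℂ f (t • z)) :
    HasDerivAt (fun s : ℝ => f (s • z)) (fderiv ℂ f (t • z) z) t := by
  simpa [Function.comp_def] using (hf.hasFDerivAt.restrictScalars ℝ).comp_hasDerivAt t
    ((hasDerivAt_id t).smul_const z)

theorem AnalyticOnNhd.sub_eq_integral_fderiv [CompleteSpace F] {f : E → F} {ρ : ℝ}
    (hf : AnalyticOnNhd ℂ f (ball 0 ρ)) {z : E} (hz : z ∈ ball (0 : E) ρ) :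
    f z - f 0 = ∫ t in (0 : ℝ)..1, fderiv ℂ f (t • z) z := by
  have hderiv : ∀ t ∈ uIcc (0 : ℝ) 1,
      HasDerivAt (fun s : ℝ => f (s • z)) (fderiv ℂ f (t • z) z) t := fun t ht =>
    (hf _ (smul_mem_ball_zero_of_mem_uIcc hz ht)).differentiableAt.hasDerivAt_comp_smul
  have hint := ContinuousOn.intervalIntegrable_comp_smul
    (hf.fderiv.continuousOn.clm_apply (continuousOn_const (c := z))) hz
  simpa using (integral_eq_sub_of_hasDerivAt hderiv hint).symm

end RayIntegral

theorem ContinuousLinearMap.pi_apply_eq_mulVec_of_forall_single {ι κ ν : Type*} [Fintype ι]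
    [DecidableEq ι] [Fintype ν] (L : κ → (ι → ℂ) →L[ℂ] ℂ) (K : ν → (ι → ℂ) →L[ℂ] ℂ)
    (A : Matrix κ ν ℂ)
    (h : ∀ m, (fun i => L i (Pi.single m 1)) = A *ᵥ fun j => K j (Pi.single m 1)) (v : ι → ℂ) :
    (fun i => L i v) = A *ᵥ fun j => K j v := by
  have hlin : (LinearMap.pi fun i => (L i : (ι → ℂ) →ₗ[ℂ] ℂ)) =
      A.mulVecLin ∘ₗ LinearMap.pi fun j => (K j : (ι → ℂ) →ₗ[ℂ] ℂ) :=
    (Pi.basisFun ℂ ι).ext fun m => by rw [Pi.basisFun_apply]; exact h m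
  exact LinearMap.congr_fun hlin v

section Monomial

variable {d : ℕ}

theorem prod_smul_pow (c : ℂ) (z : Fin d → ℂ) (α : Fin d → ℕ) :
    ∏ m, (c • z) m ^ α m = c ^ (∑ m, α m) * ∏ m, z m ^ α m := by
  simp only [Pi.smul_apply, smul_eq_mul, mul_pow, Finset.prod_mul_distrib,
    Finset.prod_pow_eq_pow_sum]

theorem integral_fderiv_mul_monomial {a u : (Fin d → ℂ) → ℂ} {α : Fin d → ℕ} {k : ℕ}
    (hα : ∑ m, α m = k + 1) (z : Fin d → ℂ) :
    ∫ t in (0 : ℝ)..1, fderiv ℂ a (t • z) z * (u (t • z) * ∏ m, (t • z) m ^ α m) =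
      (∏ m, z m ^ α m) *
        ∫ t in (0 : ℝ)..1, (t : ℂ) ^ k • (u (t • z) * fderiv ℂ a (t • z) (t • z)) := by
  rw [← intervalIntegral.integral_const_mul]
  refine integral_congr fun t _ => ?_
  simp only [← Complex.coe_smul, map_smul, prod_smul_pow, hα, smul_eq_mul]
  ring

theorem exists_analyticAt_integral_fderiv_mul_eq {ρ : ℝ} (hρ : 0 < ρ) {a f : (Fin d → ℂ) → ℂ}
    (ha : AnalyticOnNhd ℂ a (ball 0 ρ)) (hf0 : f 0 = 0)
    (hf : (∀ z ∈ ball (0 : Fin d → ℂ) ρ, f z = 0) ∨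
      ∃ (u : (Fin d → ℂ) → ℂ) (α : Fin d → ℕ), AnalyticOnNhd ℂ u (ball 0 ρ) ∧
        (∀ z ∈ ball (0 : Fin d → ℂ) ρ, u z ≠ 0) ∧
        ∀ z ∈ ball (0 : Fin d → ℂ) ρ, f z = u z * ∏ m, z m ^ α m) :
    ∃ R : (Fin d → ℂ) → ℂ, AnalyticAt ℂ R 0 ∧ R 0 = 0 ∧
      ∀ z ∈ ball (0 : Fin d → ℂ) ρ,
        ∫ t in (0 : ℝ)..1, fderiv ℂ a (t • z) z * f (t • z) = R z * f z := by
  have h0 : (0 : Fin d → ℂ) ∈ ball 0 ρ := mem_ball_self hρ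
  rcases hf with hf | ⟨u, α, hu, hu0, hfu⟩
  · refine ⟨0, analyticAt_const, rfl, fun z hz => ?_⟩
    rw [Pi.zero_apply, zero_mul]
    exact (integral_congr (g := fun _ => 0) fun t ht => by
      simp [hf _ (smul_mem_ball_zero_of_mem_uIcc hz ht)]).trans integral_zero
  obtain ⟨k, hk⟩ : ∃ k, ∑ m, α m = k + 1 := by
    refine Nat.exists_eq_succ_of_ne_zero fun hα => hu0 0 h0 ?_
    rw [Finset.sum_eq_zero_iff] at hα
    simpa [hα, hf0] using (hfu 0 h0).symm
  have hΨ : AnalyticAt ℂ (fun w => u w * fderiv ℂ a w w) 0 :=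
    (hu 0 h0).mul ((ha.fderiv 0 h0).clm_apply analyticAt_id)
  refine ⟨fun z => (u z)⁻¹ *
      ∫ t in (0 : ℝ)..1, (t : ℂ) ^ k • (u (t • z) * fderiv ℂ a (t • z) (t • z)),
    ((hu 0 h0).inv (hu0 0 h0)).mul (hΨ.integral_pow_smul_comp_smul k), by simp, fun z hz => ?_⟩
  have hcongr : ∫ t in (0 : ℝ)..1, fderiv ℂ a (t • z) z * f (t • z) =
      ∫ t in (0 : ℝ)..1, fderiv ℂ a (t • z) z * (u (t • z) * ∏ m, (t • z) m ^ α m) :=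
    integral_congr fun t ht => by rw [hfu _ (smul_mem_ball_zero_of_mem_uIcc hz ht)]
  rw [hcongr, integral_fderiv_mul_monomial hk, hfu z hz]
  field_simp [hu0 z hz]

end Monomial

theorem sub_sum_mul_eq_neg_sum_integral {E ι : Type*} [NormedAddCommGroup E] [NormedSpace ℂ E]
    [Fintype ι] {ρ : ℝ} {F G : E → ι → ℂ} {τ : E → Matrix ι ι ℂ}
    (hF : AnalyticOnNhd ℂ F (ball 0 ρ)) (hG : AnalyticOnNhd ℂ G (ball 0 ρ))
    (hτ : ∀ i j, AnalyticOnNhd ℂ (fun w => τ w i j) (ball 0 ρ)) (hF0 : F 0 = 0) (hG0 : G 0 = 0)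
    (hode : ∀ w ∈ ball (0 : E) ρ, ∀ v,
      (fun i => fderiv ℂ (fun w => G w i) w v) = τ w *ᵥ fun j => fderiv ℂ (fun w => F w j) w v)
    {z : E} (hz : z ∈ ball (0 : E) ρ) (i : ι) :
    G z i - ∑ j, τ z i j * F z j =
      -∑ j, ∫ t in (0 : ℝ)..1, fderiv ℂ (fun w => τ w i j) (t • z) z * F (t • z) j := by
  have hFj : ∀ j, AnalyticOnNhd ℂ (fun w => F w j) (ball 0 ρ) := analyticOnNhd_pi_iff.mp hF
  have hGi : AnalyticOnNhd ℂ (fun w => G w i) (ball 0 ρ) := analyticOnNhd_pi_iff.mp hG i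
  have hH : AnalyticOnNhd ℂ (fun w => G w i - ∑ j, τ w i j * F w j) (ball 0 ρ) :=
    hGi.sub (Finset.analyticOnNhd_fun_sum _ fun j _ => (hτ i j).mul (hFj j))
  have hDH : ∀ w ∈ ball (0 : E) ρ, fderiv ℂ (fun w => G w i - ∑ j, τ w i j * F w j) w z =
      -∑ j, fderiv ℂ (fun w => τ w i j) w z * F w j := by
    intro w hw
    have hD : HasFDerivAt (fun w => G w i - ∑ j, τ w i j * F w j) _ w :=
      (hGi w hw).differentiableAt.hasFDerivAt.sub (HasFDerivAt.fun_sum (u := Finset.univ)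
        fun j _ => (hτ i j w hw).differentiableAt.hasFDerivAt.fun_mul
          (hFj j w hw).differentiableAt.hasFDerivAt)
    have hodewz := congrFun (hode w hw z) i
    simp only [mulVec, dotProduct] at hodewz
    rw [hD.fderiv]
    simp only [_root_.sub_apply, _root_.sum_apply, _root_.add_apply, _root_.smul_apply,
      smul_eq_mul, Finset.sum_add_distrib, hodewz, sub_add_cancel_left, mul_comm (F w _)]
  have hint : ∀ j, IntervalIntegrable
      (fun t : ℝ => fderiv ℂ (fun w => τ w i j) (t • z) z * F (t • z) j) volume 0 1 := fun j =>
    (((hτ i j).fderiv.continuousOn.clm_apply (continuousOn_const (c := z))).mul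
      (hFj j).continuousOn).intervalIntegrable_comp_smul hz
  calc G z i - ∑ j, τ z i j * F z j
      = (G z i - ∑ j, τ z i j * F z j) - (G 0 i - ∑ j, τ 0 i j * F 0 j) := by simp [hF0, hG0]
    _ = ∫ t in (0 : ℝ)..1, fderiv ℂ (fun w => G w i - ∑ j, τ w i j * F w j) (t • z) z :=
        hH.sub_eq_integral_fderiv hz
    _ = ∫ t in (0 : ℝ)..1, -∑ j, fderiv ℂ (fun w => τ w i j) (t • z) z * F (t • z) j :=
        integral_congr fun t ht => hDH _ (smul_mem_ball_zero_of_mem_uIcc hz ht)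
    _ = _ := by
      rw [intervalIntegral.integral_neg, intervalIntegral.integral_finsetSum fun j _ => hint j]

theorem stmt_14_general (d g : ℕ) (ρ : ℝ) (hρ : 0 < ρ)
    (F G : (Fin d → ℂ) → Fin g → ℂ)
    (τ : (Fin d → ℂ) → Matrix (Fin g) (Fin g) ℂ)
    (hF : AnalyticOnNhd ℂ F (ball 0 ρ)) (hG : AnalyticOnNhd ℂ G (ball 0 ρ))
    (hτ : ∀ i j : Fin g, AnalyticOnNhd ℂ (fun w => τ w i j) (ball 0 ρ))
    (hF0 : F 0 = 0) (hG0 : G 0 = 0)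
    (hode : ∀ z ∈ ball (0 : Fin d → ℂ) ρ, ∀ m : Fin d,
      (fun i => fderiv ℂ (fun w => G w i) z (Pi.single m 1)) =
        (τ z).mulVec (fun j => fderiv ℂ (fun w => F w j) z (Pi.single m 1)))
    (hform : ∀ j : Fin g,
      (∀ z ∈ ball (0 : Fin d → ℂ) ρ, F z j = 0) ∨
      (∃ (u : (Fin d → ℂ) → ℂ) (α : Fin d → ℕ),
        AnalyticOnNhd ℂ u (ball 0 ρ) ∧ (∀ z ∈ ball (0 : Fin d → ℂ) ρ, u z ≠ 0) ∧
        ∀ z ∈ ball (0 : Fin d → ℂ) ρ, F z j = u z * ∏ m : Fin d, (z m) ^ (α m))) :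
    ∃ ρ' : ℝ, 0 < ρ' ∧ ρ' ≤ ρ ∧
      ∃ S : (Fin d → ℂ) → Matrix (Fin g) (Fin g) ℂ,
        (∀ i j : Fin g, AnalyticOnNhd ℂ (fun w => S w i j) (ball 0 ρ')) ∧
        (∀ z ∈ ball (0 : Fin d → ℂ) ρ', G z = (S z).mulVec (F z)) ∧
        S 0 = τ 0 := by
  have hdiv : ∀ i j, ∃ R : (Fin d → ℂ) → ℂ, AnalyticAt ℂ R 0 ∧ R 0 = 0 ∧
      ∀ z ∈ ball (0 : Fin d → ℂ) ρ, ∫ t in (0 : ℝ)..1,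
        fderiv ℂ (fun w => τ w i j) (t • z) z * F (t • z) j = R z * F z j := fun i j =>
    exists_analyticAt_integral_fderiv_mul_eq hρ (hτ i j) (congrFun hF0 j) (hform j)
  choose R hRan hR0 hRF using hdiv
  obtain ⟨ε, hε, hRball⟩ :
      ∃ ε > 0, ∀ w ∈ ball (0 : Fin d → ℂ) ε, ∀ i j, AnalyticAt ℂ (R i j) w :=
    eventually_nhds_iff_ball.mp <| eventually_all.2 fun i => eventually_all.2 fun j =>
      (hRan i j).eventually_analyticAt
  have hsub : ball (0 : Fin d → ℂ) (min ρ ε) ⊆ ball 0 ρ := ball_subset_ball (min_le_left _ _)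
  refine ⟨min ρ ε, lt_min hρ hε, min_le_left _ _, fun z => τ z - Matrix.of fun i j => R i j z,
    fun i j => ((hτ i j).mono hsub).sub fun w hw =>
      hRball w (ball_subset_ball (min_le_right _ _) hw) i j,
    fun z hz => funext fun i => ?_, by ext i j; simp [hR0]⟩
  have hode' : ∀ w ∈ ball (0 : Fin d → ℂ) ρ, ∀ v, (fun i => fderiv ℂ (fun w => G w i) w v) =
      τ w *ᵥ fun j => fderiv ℂ (fun w => F w j) w v := fun w hw =>
    ContinuousLinearMap.pi_apply_eq_mulVec_of_forall_single _ _ _ (hode w hw)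
  have hGz := sub_sum_mul_eq_neg_sum_integral hF hG hτ hF0 hG0 hode' (hsub hz) i
  simp only [hRF _ _ z (hsub hz)] at hGz
  simp only [mulVec, dotProduct, Matrix.sub_apply, of_apply, sub_mul, Finset.sum_sub_distrib]
  linear_combination hGz

/-- Lemma A.2: if moreover each component `F_j` is, up to a holomorphic unit, a monomial
(so its zero divisor is a union of coordinate hyperplanes), then on a smaller ball one
can write `G = S F` with `S` holomorphic and `S(0) = τ(0)`. -/
theorem stmt_14 (d g : ℕ) (hd : 1 ≤ d) (hg : 1 ≤ g) (ρ : ℝ) (hρ : 0 < ρ)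
    (F G : (Fin d → ℂ) → Fin g → ℂ)
    (τ : (Fin d → ℂ) → Matrix (Fin g) (Fin g) ℂ)
    (hF : AnalyticOnNhd ℂ F (ball 0 ρ)) (hG : AnalyticOnNhd ℂ G (ball 0 ρ))
    (hτ : ∀ i j : Fin g, AnalyticOnNhd ℂ (fun w => τ w i j) (ball 0 ρ))
    (hF0 : F 0 = 0) (hG0 : G 0 = 0)
    (hode : ∀ z ∈ ball (0 : Fin d → ℂ) ρ, ∀ m : Fin d,
      (fun i => fderiv ℂ (fun w => G w i) z (Pi.single m 1)) =
        (τ z).mulVec (fun j => fderiv ℂ (fun w => F w j) z (Pi.single m 1)))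
    (hform : ∀ j : Fin g,
      (∀ z ∈ ball (0 : Fin d → ℂ) ρ, F z j = 0) ∨
      (∃ (u : (Fin d → ℂ) → ℂ) (α : Fin d → ℕ),
        AnalyticOnNhd ℂ u (ball 0 ρ) ∧ (∀ z ∈ ball (0 : Fin d → ℂ) ρ, u z ≠ 0) ∧
        ∀ z ∈ ball (0 : Fin d → ℂ) ρ, F z j = u z * ∏ m : Fin d, (z m) ^ (α m))) :
    ∃ ρ' : ℝ, 0 < ρ' ∧ ρ' ≤ ρ ∧
      ∃ S : (Fin d → ℂ) → Matrix (Fin g) (Fin g) ℂ,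
        (∀ i j : Fin g, AnalyticOnNhd ℂ (fun w => S w i j) (ball 0 ρ')) ∧
        (∀ z ∈ ball (0 : Fin d → ℂ) ρ', G z = (S z).mulVec (F z)) ∧
        S 0 = τ 0 :=
  stmt_14_general d g ρ hρ F G τ hF hG hτ hF0 hG0 hode hform
end

section
/- Let ε : {(z₁, z₂) ∈ ℂ² : z₁ + z₂² ≠ 0} → ℂ be the function ε(z₁, z₂) = (z₁²/2 + z₁z₂²/3)/(z₁ + z₂²). Then ε does not extend continuously to the origin: there is no continuous function on any open neighborhood of (0,0) in ℂ² whose restriction to the complement of {z₁ + z₂² = 0} agrees with ε. Equivalently, there exist two sequences in the domain of ε converging to (0,0) along which ε converges to two different limits. -/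
/-!
On the axis `z₂ = 0` the function is `z₁ / 2`, which tends to `0`. On the curve
`s ↦ (s² / (s² - 1), s / (s² - 1))` one has `z₁ + z₂² = z₁²`, so there it equals
`1/2 + z₂² / (3 z₁) = 1/2 + 1 / (3 (s² - 1))`, which tends to `1/6`. Both curves approach the
origin inside the domain, so no continuous extension can exist.
-/

open Filter Topology

noncomputable section

def eps (p : ℂ × ℂ) : ℂ := (p.1 ^ 2 / 2 + p.1 * p.2 ^ 2 / 3) / (p.1 + p.2 ^ 2)

def epsDomain : Set (ℂ × ℂ) := {p | p.1 + p.2 ^ 2 ≠ 0}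

def epsCurve (s : ℂ) : ℂ × ℂ := (s ^ 2 / (s ^ 2 - 1), s / (s ^ 2 - 1))

lemma tendsto_eps_axis :
    Tendsto (fun t : ℂ => eps (t, 0)) (𝓝[≠] 0) (𝓝 0) := by
  have hlim : Tendsto (fun t : ℂ => t / 2) (𝓝[≠] 0) (𝓝 0) := by
    simpa using (((continuous_id (X := ℂ)).div_const 2).tendsto 0).mono_left nhdsWithin_le_nhds
  refine hlim.congr' (eventually_nhdsWithin_of_forall fun t (ht : t ≠ 0) => ?_)
  unfold eps
  rw [eq_div_iff (by simpa using ht)]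
  ring

lemma tendsto_axis_epsDomain :
    Tendsto (fun t : ℂ => (t, (0 : ℂ))) (𝓝[≠] 0) (𝓝[epsDomain] 0) := by
  refine tendsto_nhdsWithin_iff.mpr ⟨?_, eventually_nhdsWithin_of_forall fun t ht => ?_⟩
  · exact ((continuous_id.prodMk continuous_const).tendsto 0).mono_left nhdsWithin_le_nhds
  · simpa [epsDomain] using ht

lemma eventually_sq_ne_one : ∀ᶠ s : ℂ in 𝓝[≠] 0, s ^ 2 - 1 ≠ 0 := by
  refine eventually_nhdsWithin_of_eventually_nhds
    ((continuous_pow 2 |>.sub continuous_const).continuousAt.eventually_ne ?_)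
  norm_num

lemma epsCurve_fst_add_snd_sq {s : ℂ} (hs : s ^ 2 - 1 ≠ 0) :
    (epsCurve s).1 + (epsCurve s).2 ^ 2 = (epsCurve s).1 ^ 2 := by
  simp only [epsCurve]
  field_simp
  ring

lemma eps_epsCurve {s : ℂ} (hs0 : s ≠ 0) (hs : s ^ 2 - 1 ≠ 0) :
    eps (epsCurve s) = 1 / 2 + 1 / (3 * (s ^ 2 - 1)) := by
  rw [eps, epsCurve_fst_add_snd_sq hs]
  simp only [epsCurve]
  field_simp

lemma tendsto_eps_epsCurve : Tendsto (eps ∘ epsCurve) (𝓝[≠] 0) (𝓝 (1 / 6)) := by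
  have hcont : ContinuousAt (fun s : ℂ => 1 / 2 + 1 / (3 * (s ^ 2 - 1))) 0 := by
    fun_prop (disch := norm_num)
  have hvalue : (1 / 2 + 1 / (3 * ((0 : ℂ) ^ 2 - 1))) = 1 / 6 := by norm_num
  refine (hvalue ▸ hcont.tendsto.mono_left nhdsWithin_le_nhds).congr' ?_
  filter_upwards [self_mem_nhdsWithin, eventually_sq_ne_one] with s hs0 hs
  exact (eps_epsCurve hs0 hs).symm

lemma tendsto_epsCurve_epsDomain : Tendsto epsCurve (𝓝[≠] 0) (𝓝[epsDomain] 0) := by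
  refine tendsto_nhdsWithin_iff.mpr ⟨?_, ?_⟩
  · have hcont : ContinuousAt epsCurve 0 := by
      unfold epsCurve
      fun_prop (disch := norm_num)
    have hlim := hcont.tendsto.mono_left (nhdsWithin_le_nhds (s := {0}ᶜ))
    simp only [epsCurve, ne_eq, OfNat.ofNat_ne_zero, not_false_eq_true, zero_pow, zero_div] at hlim
    exact hlim
  · filter_upwards [self_mem_nhdsWithin, eventually_sq_ne_one] with s hs0 hs
    rw [epsDomain, Set.mem_ofPred_eq, epsCurve_fst_add_snd_sq hs]
    simp only [epsCurve]
    exact pow_ne_zero 2 (div_ne_zero (pow_ne_zero 2 hs0) hs)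

lemma not_tendsto_eps (c : ℂ) : ¬ Tendsto eps (𝓝[epsDomain] 0) (𝓝 c) := by
  intro h
  have h₀ : c = 0 := tendsto_nhds_unique (h.comp tendsto_axis_epsDomain) tendsto_eps_axis
  have h₁ : c = 1 / 6 := tendsto_nhds_unique (h.comp tendsto_epsCurve_epsDomain) tendsto_eps_epsCurve
  norm_num [h₀] at h₁

end

/-- Remark after Lemma A.2: the function
`ε(z₁,z₂) = (z₁²/2 + z₁z₂²/3)/(z₁ + z₂²)` does not extend continuously to the origin:
no continuous function on a neighborhood of `(0,0)` agrees with it off `{z₁ + z₂² = 0}`. -/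
theorem stmt_17 :
    ¬ ∃ (V : Set (ℂ × ℂ)) (f : ℂ × ℂ → ℂ), IsOpen V ∧ ((0 : ℂ), (0 : ℂ)) ∈ V ∧
      ContinuousOn f V ∧
      ∀ p ∈ V, p.1 + p.2 ^ 2 ≠ 0 →
        f p = (p.1 ^ 2 / 2 + p.1 * p.2 ^ 2 / 3) / (p.1 + p.2 ^ 2) := by
  rintro ⟨V, f, hV, h0, hf, hfeq⟩
  have hV0 : V ∈ 𝓝 ((0 : ℂ), (0 : ℂ)) := hV.mem_nhds h0
  have hf_eq_eps : f =ᶠ[𝓝[epsDomain] 0] eps := by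
    filter_upwards [self_mem_nhdsWithin, mem_nhdsWithin_of_mem_nhds hV0] with p hpD hpV
    exact hfeq p hpV hpD
  have hlim : Tendsto f (𝓝[epsDomain] 0) (𝓝 (f 0)) :=
    (hf.continuousAt hV0).tendsto.mono_left nhdsWithin_le_nhds
  exact not_tendsto_eps (f 0) (hlim.congr' hf_eq_eps)
end
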